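/- For integers m ≥ 1, n ≥ 0, sequences of nonnegative integers a_i and c_i, and complex numbers x_i, the sum over all tuples (k_1,...,k_m) with ∑ k_i = n of [∏ C(a_i,k_i)C(k_i,c_i)] * |∑ x_i k_i|^2, multiplied by (A_0-C_0)(A_0-C_0-1), equals C(A_0-C_0, n-C_0) * [∏ C(a_i,c_i)] * { (n-C_0)[(n-C_0-1)|A_1|^2 + (A_0-n)(A_abs - C_abs + A_1 conj(C_1) + conj(A_1) C_1)] + (A_0-n)(A_0-n-1)|C_1|^2 }. -/

import Mathlib

open Finset

/-- Binomial coefficient with integer arguments, zero when `k < 0` or `k > n`. -/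
def ch (n k : ℤ) : ℂ := if 0 ≤ k ∧ k ≤ n then (n.toNat.choose k.toNat : ℂ) else 0

lemma ch_nat (a k : ℕ) : ch (a : ℤ) (k : ℤ) = (a.choose k : ℂ) := by
  unfold ch
  rcases le_or_gt (k : ℤ) (a : ℤ) with h | h
  · simp [h]
  · rw [if_neg (by omega), Nat.choose_eq_zero_of_lt (by exact_mod_cast h)]
    simp

-- base Vandermonde
lemma chA00 (α β n : ℕ) :
    ∑ p ∈ Finset.HasAntidiagonal.antidiagonal n, ch (α : ℤ) (p.1 : ℤ) * ch (β : ℤ) (p.2 : ℤ)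
      = ch ((α : ℤ) + β) (n : ℤ) := by
  have h := Nat.add_choose_eq α β n
  have : ((α : ℤ) + β) = ((α + β : ℕ) : ℤ) := by push_cast; ring
  rw [this, ch_nat]
  rw [Finset.sum_congr rfl (fun p _ => by rw [ch_nat, ch_nat])]
  rw [h]
  push_cast
  rfl

lemma mul_ch (b u : ℤ) : (u : ℂ) * ch b u = (b : ℂ) * ch (b - 1) (u - 1) := by
  unfold ch
  by_cases h : 0 ≤ u ∧ u ≤ b
  · by_cases hu : u = 0
    · subst hu; norm_num
    · rw [if_pos h, if_pos (by omega)]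
      have h1 : 1 ≤ u := by omega
      obtain ⟨j, hj⟩ : ∃ j : ℕ, u = (j : ℤ) + 1 := ⟨(u - 1).toNat, by omega⟩
      obtain ⟨m, hm⟩ : ∃ m : ℕ, b = (m : ℤ) + 1 := ⟨(b - 1).toNat, by omega⟩
      subst hj hm
      have ht1 : ((m : ℤ) + 1).toNat = m + 1 := by omega
      have ht2 : ((j : ℤ) + 1).toNat = j + 1 := by omega
      have ht3 : ((m : ℤ) + 1 - 1).toNat = m := by omega
      have ht4 : ((j : ℤ) + 1 - 1).toNat = j := by omega
      rw [ht1, ht2, ht3, ht4]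
      have := Nat.add_one_mul_choose_eq m j
      have : ((m + 1) * Nat.choose m j : ℂ) = ((m + 1).choose (j + 1) * (j + 1) : ℕ) := by
        exact_mod_cast congrArg (Nat.cast : ℕ → ℂ) this
      push_cast at this ⊢
      linear_combination -this
  · rw [if_neg h, if_neg (by omega)]
    ring

lemma ch_neg {a u : ℤ} (h : u < 0) : ch a u = 0 := by unfold ch; rw [if_neg (by omega)]

lemma chA0 (α β t n : ℕ) :
    ∑ p ∈ Finset.HasAntidiagonal.antidiagonal n, ch (α : ℤ) (p.1 : ℤ) * ch (β : ℤ) ((p.2 : ℤ) - t)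
      = ch ((α : ℤ) + β) ((n : ℤ) - t) := by
  induction t generalizing n with
  | zero => simpa using chA00 α β n
  | succ t ih =>
    cases n with
    | zero =>
      simp only [Finset.Nat.antidiagonal_zero, Finset.sum_singleton]
      rw [ch_neg (u := ((0:ℕ):ℤ) - ((t+1:ℕ):ℤ)) (by push_cast; omega), mul_zero]
      first
      | rfl
      | (symm; exact ch_neg (by push_cast; omega))
    | succ n =>
      rw [Finset.Nat.sum_antidiagonal_succ']
      rw [ch_neg (a := (β:ℤ)) (u := (((n+1,0).2:ℕ):ℤ) - ((t+1:ℕ):ℤ)) (by push_cast; omega)]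
      have e1 : ∀ p : ℕ × ℕ, ch (α:ℤ) (p.1:ℤ) * ch (β:ℤ) (((p.2+1:ℕ):ℤ) - ((t+1:ℕ):ℤ))
          = ch (α:ℤ) (p.1:ℤ) * ch (β:ℤ) ((p.2:ℤ) - t) := by
        intro p; congr 1; push_cast; ring
      rw [Finset.sum_congr rfl (fun p _ => e1 p), ih n]
      rw [mul_zero, zero_add]
      congr 1
      push_cast; ring

lemma chA (α β s t n : ℕ) :
    ∑ p ∈ Finset.HasAntidiagonal.antidiagonal n, ch (α : ℤ) ((p.1 : ℤ) - s) * ch (β : ℤ) ((p.2 : ℤ) - t)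
      = ch ((α : ℤ) + β) ((n : ℤ) - s - t) := by
  induction s generalizing n with
  | zero => simpa using chA0 α β t n
  | succ s ih =>
    cases n with
    | zero =>
      simp only [Finset.Nat.antidiagonal_zero, Finset.sum_singleton]
      rw [ch_neg (u := ((0:ℕ):ℤ) - ((s+1:ℕ):ℤ)) (by push_cast; omega), zero_mul]
      first
      | rfl
      | (symm; exact ch_neg (by push_cast; omega))
    | succ n =>
      rw [Finset.Nat.sum_antidiagonal_succ]
      rw [ch_neg (a := (α:ℤ)) (u := (((0, n+1).1:ℕ):ℤ) - ((s+1:ℕ):ℤ)) (by push_cast; omega)]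
      have e1 : ∀ p : ℕ × ℕ, ch (α:ℤ) (((p.1+1:ℕ):ℤ) - ((s+1:ℕ):ℤ)) * ch (β:ℤ) ((p.2:ℤ) - t)
          = ch (α:ℤ) ((p.1:ℤ) - s) * ch (β:ℤ) ((p.2:ℤ) - t) := by
        intro p; congr 2; push_cast; ring
      rw [Finset.sum_congr rfl (fun p _ => e1 p), ih n]
      rw [zero_mul, zero_add]
      congr 1
      push_cast; ring

-- guarded shifted Vandermonde: slots hold (α - d) and (β - e); z vanishes if slots negative
lemma chA' (α β d e : ℕ) (s t : ℤ) (hs : 0 ≤ s) (ht : 0 ≤ t) (n : ℕ) (z : ℂ)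
    (hd : α < d → z = 0) (he : β < e → z = 0) :
    z * ∑ p ∈ Finset.HasAntidiagonal.antidiagonal n, ch ((α : ℤ) - d) ((p.1 : ℤ) - s) * ch ((β : ℤ) - e) ((p.2 : ℤ) - t)
      = z * ch ((α : ℤ) - d + ((β : ℤ) - e)) ((n : ℤ) - s - t) := by
  by_cases h1 : α < d
  · rw [hd h1, zero_mul, zero_mul]
  by_cases h2 : β < e
  · rw [he h2, zero_mul, zero_mul]
  push_neg at h1 h2
  have hA : ((α : ℤ) - d) = ((α - d : ℕ) : ℤ) := by omega
  have hB : ((β : ℤ) - e) = ((β - e : ℕ) : ℤ) := by omega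
  have hsn : s = ((s.toNat : ℕ) : ℤ) := by omega
  have htn : t = ((t.toNat : ℕ) : ℤ) := by omega
  rw [hA, hB, hsn, htn, chA (α - d) (β - e) s.toNat t.toNat n]

lemma chA'' (α β d e : ℕ) (s t : ℤ) (hs : 0 ≤ s) (ht : 0 ≤ t) (n : ℕ) (z : ℂ)
    (hd : α < d → z = 0) (he : β < e → z = 0) (A u : ℤ)
    (hA : A = (α : ℤ) - d + ((β : ℤ) - e)) (hu : u = (n : ℤ) - s - t) :
    z * ∑ p ∈ Finset.HasAntidiagonal.antidiagonal n, ch ((α : ℤ) - d) ((p.1 : ℤ) - s) * ch ((β : ℤ) - e) ((p.2 : ℤ) - t)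
      = z * ch A u := by
  rw [chA' α β d e s t hs ht n z hd he, hA, hu]

lemma mul_ch' (β s : ℤ) (k : ℕ) :
    (k : ℂ) * ch β ((k : ℤ) - s) = (s : ℂ) * ch β ((k : ℤ) - s) + (β : ℂ) * ch (β - 1) ((k : ℤ) - s - 1) := by
  have h := mul_ch β ((k : ℤ) - s)
  push_cast at h
  linear_combination h

lemma chE2 (b u : ℤ) :
    (b : ℂ) * ((b : ℂ) - 1) * ch (b - 1) (u - 1) = ((b : ℂ) - 1) * (u : ℂ) * ch b u := by
  have h := mul_ch b u
  linear_combination (1 - (b : ℂ)) * h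

lemma chE3 (b u : ℤ) :
    (b : ℂ) * ((b : ℂ) - 1) * ch (b - 2) (u - 2) = (u : ℂ) * ((u : ℂ) - 1) * ch b u := by
  have h1 := mul_ch b u
  have h2 := mul_ch (b - 1) (u - 1)
  have h3 : (b - 1 - 1 : ℤ) = b - 2 := by ring
  have h4 : (u - 1 - 1 : ℤ) = u - 2 := by ring
  rw [h3, h4] at h2
  push_cast at h2
  linear_combination (-(b : ℂ)) * h2 - ((u : ℂ) - 1) * h1

lemma sum_AT_succ {M : Type*} [AddCommMonoid M] (m n : ℕ) (f : (Fin (m + 1) → ℕ) → M) :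
    ∑ k ∈ Finset.Nat.antidiagonalTuple (m + 1) n, f k
      = ∑ p ∈ Finset.HasAntidiagonal.antidiagonal n, ∑ k ∈ Finset.Nat.antidiagonalTuple m p.2, f (Fin.cons p.1 k) := by
  rw [Finset.sum_sigma']
  refine Finset.sum_nbij'
    (fun (k : Fin (m+1) → ℕ) => (⟨(k 0, ∑ i : Fin m, k i.succ), Fin.tail k⟩ :
      (_ : ℕ × ℕ) × (Fin m → ℕ)))
    (fun q => Fin.cons q.1.1 q.2) ?_ ?_ ?_ ?_ ?_
  · intro k hk
    rw [Finset.Nat.mem_antidiagonalTuple] at hk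
    refine Finset.mem_sigma.2 ⟨Finset.HasAntidiagonal.mem_antidiagonal.2 ?_, Finset.Nat.mem_antidiagonalTuple.2 rfl⟩
    rw [← hk, Fin.sum_univ_succ]
  · intro q hq
    rw [Finset.mem_sigma] at hq
    rw [Finset.Nat.mem_antidiagonalTuple, Fin.sum_univ_succ]
    simp only [Fin.cons_zero, Fin.cons_succ]
    have h2 := Finset.Nat.mem_antidiagonalTuple.1 hq.2
    have h1 := Finset.HasAntidiagonal.mem_antidiagonal.1 hq.1
    rw [h2, h1]
  · intro k hk
    exact Fin.cons_self_tail k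
  · intro q hq
    rw [Finset.mem_sigma] at hq
    have h2 := Finset.Nat.mem_antidiagonalTuple.1 hq.2
    refine Sigma.ext ?_ (by simp [Fin.tail_cons])
    simp [Fin.cons_zero, Fin.cons_succ, h2]
  · intro k hk
    exact congrArg f (Fin.cons_self_tail k).symm

lemma G0 : ∀ (m n : ℕ) (b c : Fin m → ℕ),
    ∑ k ∈ Finset.Nat.antidiagonalTuple m n, ∏ i, ch (b i) ((k i : ℤ) - c i)
      = ch (∑ i, (b i : ℤ)) ((n : ℤ) - ∑ i, (c i : ℤ)) := by
  intro m
  induction m with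
  | zero =>
    intro n b c
    cases n with
    | zero => simp [ch]
    | succ n =>
      simp only [Finset.Nat.antidiagonalTuple_zero_succ, Finset.sum_empty, Finset.univ_eq_empty,
        Finset.sum_empty]
      rw [eq_comm]
      unfold ch
      rw [if_neg (by push_cast; omega)]
  | succ m ih =>
    intro n b c
    rw [sum_AT_succ]
    have inner : ∀ p : ℕ × ℕ, ∀ k ∈ Finset.Nat.antidiagonalTuple m p.2,
        (∏ i, ch (b i) ((Fin.cons (α := fun _ => ℕ) p.1 k i : ℤ) - (c i : ℤ)))
          = ch (b 0) ((p.1 : ℤ) - c 0) * ∏ i : Fin m, ch (b i.succ) ((k i : ℤ) - c i.succ) := by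
      intro p k _
      rw [Fin.prod_univ_succ]
      simp only [Fin.cons_zero, Fin.cons_succ]
    calc ∑ p ∈ Finset.HasAntidiagonal.antidiagonal n, ∑ k ∈ Finset.Nat.antidiagonalTuple m p.2,
          ∏ i, ch (b i) ((Fin.cons (α := fun _ => ℕ) p.1 k i : ℤ) - (c i : ℤ))
        = ∑ p ∈ Finset.HasAntidiagonal.antidiagonal n, ch (b 0) ((p.1 : ℤ) - c 0)
            * ch (∑ i : Fin m, (b i.succ : ℤ)) ((p.2 : ℤ) - ∑ i : Fin m, (c i.succ : ℤ)) := by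
          refine Finset.sum_congr rfl fun p _ => ?_
          rw [Finset.sum_congr rfl (inner p), ← Finset.mul_sum, ih p.2 (fun i => b i.succ) (fun i => c i.succ)]
      _ = ch (∑ i, (b i : ℤ)) ((n : ℤ) - ∑ i, (c i : ℤ)) := by
          have h := chA (b 0) (∑ i : Fin m, b i.succ) (c 0) (∑ i : Fin m, c i.succ) n
          push_cast at h
          rw [Fin.sum_univ_succ (f := fun i => (b i : ℤ)), Fin.sum_univ_succ (f := fun i => (c i : ℤ))]
          rw [h]
          ring_nf

lemma G1 : ∀ (m n : ℕ) (b c : Fin m → ℕ) (x : Fin m → ℂ),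
    ∑ k ∈ Finset.Nat.antidiagonalTuple m n,
        (∏ i, ch (b i) ((k i : ℤ) - c i)) * (∑ i, x i * (k i : ℂ))
      = (∑ i, x i * (c i : ℂ)) * ch (∑ i, (b i : ℤ)) ((n : ℤ) - ∑ i, (c i : ℤ))
        + (∑ i, x i * (b i : ℂ)) * ch ((∑ i, (b i : ℤ)) - 1) ((n : ℤ) - (∑ i, (c i : ℤ)) - 1) := by
  intro m
  induction m with
  | zero =>
    intro n b c x
    cases n with
    | zero => simp
    | succ n => simp
  | succ m ih =>
    intro n b c x
    rw [sum_AT_succ]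
    -- closed form of the inner sum, for each p
    have inner : ∀ p ∈ Finset.HasAntidiagonal.antidiagonal n,
        (∑ k ∈ Finset.Nat.antidiagonalTuple m p.2,
          (∏ i, ch (b i) ((Fin.cons (α := fun _ => ℕ) p.1 k i : ℤ) - (c i : ℤ)))
            * (∑ i, x i * (Fin.cons (α := fun _ => ℕ) p.1 k i : ℂ)))
        = ch (b 0) ((p.1 : ℤ) - c 0) *
            ((x 0 * (p.1 : ℂ) + ∑ i : Fin m, x i.succ * (c i.succ : ℂ))
              * ch (∑ i : Fin m, (b i.succ : ℤ)) ((p.2 : ℤ) - ∑ i : Fin m, (c i.succ : ℤ))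
            + (∑ i : Fin m, x i.succ * (b i.succ : ℂ))
              * ch ((∑ i : Fin m, (b i.succ : ℤ)) - 1) ((p.2 : ℤ) - (∑ i : Fin m, (c i.succ : ℤ)) - 1)) := by
      intro p _
      have e1 : ∀ k ∈ Finset.Nat.antidiagonalTuple m p.2,
          (∏ i, ch (b i) ((Fin.cons (α := fun _ => ℕ) p.1 k i : ℤ) - (c i : ℤ)))
            * (∑ i, x i * (Fin.cons (α := fun _ => ℕ) p.1 k i : ℂ))
          = ch (b 0) ((p.1 : ℤ) - c 0) * ((x 0 * (p.1 : ℂ)) *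
              (∏ i : Fin m, ch (b i.succ) ((k i : ℤ) - c i.succ))
            + ((∏ i : Fin m, ch (b i.succ) ((k i : ℤ) - c i.succ))
                * (∑ i : Fin m, x i.succ * (k i : ℂ)))) := by
        intro k _
        rw [Fin.prod_univ_succ, Fin.sum_univ_succ]
        simp only [Fin.cons_zero, Fin.cons_succ]
        ring
      rw [Finset.sum_congr rfl e1, ← Finset.mul_sum, Finset.sum_add_distrib, ← Finset.mul_sum,
        G0 m p.2 (fun i => b i.succ) (fun i => c i.succ),
        ih p.2 (fun i => b i.succ) (fun i => c i.succ) (fun i => x i.succ)]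
      ring
    rw [Finset.sum_congr rfl inner]
    -- split p.1-weight using mul_ch'
    have e2 : ∀ p ∈ Finset.HasAntidiagonal.antidiagonal n,
        ch (b 0) ((p.1 : ℤ) - c 0) *
            ((x 0 * (p.1 : ℂ) + ∑ i : Fin m, x i.succ * (c i.succ : ℂ))
              * ch (∑ i : Fin m, (b i.succ : ℤ)) ((p.2 : ℤ) - ∑ i : Fin m, (c i.succ : ℤ))
            + (∑ i : Fin m, x i.succ * (b i.succ : ℂ))
              * ch ((∑ i : Fin m, (b i.succ : ℤ)) - 1) ((p.2 : ℤ) - (∑ i : Fin m, (c i.succ : ℤ)) - 1))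
        = (x 0 * (c 0 : ℂ) + ∑ i : Fin m, x i.succ * (c i.succ : ℂ)) *
            (ch (b 0) ((p.1 : ℤ) - c 0) * ch (∑ i : Fin m, (b i.succ : ℤ)) ((p.2 : ℤ) - ∑ i : Fin m, (c i.succ : ℤ)))
          + (x 0 * (b 0 : ℂ)) *
            (ch ((b 0 : ℤ) - 1) ((p.1 : ℤ) - ((c 0 : ℤ) + 1)) * ch (∑ i : Fin m, (b i.succ : ℤ)) ((p.2 : ℤ) - ∑ i : Fin m, (c i.succ : ℤ)))
          + (∑ i : Fin m, x i.succ * (b i.succ : ℂ)) *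
            (ch (b 0) ((p.1 : ℤ) - c 0) * ch ((∑ i : Fin m, (b i.succ : ℤ)) - 1) ((p.2 : ℤ) - ((∑ i : Fin m, (c i.succ : ℤ)) + 1))) := by
      intro p _
      have h := mul_ch' (b 0) (c 0) p.1
      linear_combination (norm := (push_cast; ring_nf))
        (x 0 * ch (∑ i : Fin m, (b i.succ : ℤ)) ((p.2 : ℤ) - ∑ i : Fin m, (c i.succ : ℤ))) * h
    rw [Finset.sum_congr rfl e2]
    simp only [Finset.sum_add_distrib, ← Finset.mul_sum]
    -- closed forms of the three convolution sums
    have h1 := chA'' (b 0) (∑ i : Fin m, b i.succ) 0 0 (c 0) (∑ i : Fin m, (c i.succ : ℤ))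
      (by positivity) (by positivity) n 1 (by omega) (by omega)
      ((b 0 : ℤ) + ∑ i : Fin m, (b i.succ : ℤ)) ((n : ℤ) - ((c 0 : ℤ) + ∑ i : Fin m, (c i.succ : ℤ)))
      (by push_cast; ring) (by push_cast; ring)
    have h2 := chA'' (b 0) (∑ i : Fin m, b i.succ) 1 0 ((c 0 : ℤ) + 1) (∑ i : Fin m, (c i.succ : ℤ))
      (by positivity) (by positivity) n (b 0 : ℂ)
      (fun h => by interval_cases (b 0) <;> simp) (by omega)
      ((b 0 : ℤ) + (∑ i : Fin m, (b i.succ : ℤ)) - 1) ((n : ℤ) - ((c 0 : ℤ) + ∑ i : Fin m, (c i.succ : ℤ)) - 1)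
      (by push_cast; ring) (by push_cast; ring)
    have h3 := chA'' (b 0) (∑ i : Fin m, b i.succ) 0 1 (c 0) ((∑ i : Fin m, (c i.succ : ℤ)) + 1)
      (by positivity) (by positivity) n (∑ i : Fin m, x i.succ * (b i.succ : ℂ))
      (by omega)
      (fun h => Finset.sum_eq_zero fun i _ => by
        have hz : b i.succ = 0 :=
          Finset.sum_eq_zero_iff.mp (Nat.lt_one_iff.mp h) i (Finset.mem_univ i)
        rw [hz]; simp)
      ((b 0 : ℤ) + (∑ i : Fin m, (b i.succ : ℤ)) - 1) ((n : ℤ) - ((c 0 : ℤ) + ∑ i : Fin m, (c i.succ : ℤ)) - 1)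
      (by push_cast; ring) (by push_cast; ring)
    push_cast at h1 h2 h3
    simp only [sub_zero] at h1 h2 h3
    rw [Fin.sum_univ_succ (f := fun i => (b i : ℤ)), Fin.sum_univ_succ (f := fun i => (c i : ℤ)),
      Fin.sum_univ_succ (f := fun i => x i * (c i : ℂ)), Fin.sum_univ_succ (f := fun i => x i * (b i : ℂ))]
    linear_combination (norm := (push_cast; ring1))
      (x 0 * (c 0 : ℂ) + ∑ i : Fin m, x i.succ * (c i.succ : ℂ)) * h1 + x 0 * h2 + h3

lemma coeff_vanish (m : ℕ) (b : Fin m → ℕ) (x y : Fin m → ℂ) (h : ∑ i, b i ≤ 1) :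
    (∑ i, x i * (b i : ℂ)) * (∑ i, y i * (b i : ℂ)) = ∑ i, x i * y i * (b i : ℂ) := by
  rw [Finset.sum_mul_sum]
  refine Finset.sum_congr rfl fun i _ => ?_
  rcases Nat.eq_zero_or_pos (b i) with hb | hb
  · rw [hb]
    simp
  · have hb1 : b i = 1 := by
      have := Finset.single_le_sum (f := b) (fun j _ => Nat.zero_le _) (Finset.mem_univ i)
      omega
    have hz : ∀ j, j ≠ i → b j = 0 := by
      intro j hj
      by_contra hbj
      have h2 : 2 ≤ ∑ k, b k := by
        have := Finset.add_sum_erase Finset.univ b (Finset.mem_univ i)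
        have hjmem : j ∈ Finset.univ.erase i := Finset.mem_erase.mpr ⟨hj, Finset.mem_univ j⟩
        have := Finset.single_le_sum (f := b) (fun k _ => Nat.zero_le _) hjmem
        omega
      omega
    rw [Finset.sum_eq_single i]
    · rw [hb1]; push_cast; ring
    · intro j _ hj
      rw [hz j hj]
      simp
    · intro hi; exact absurd (Finset.mem_univ i) hi

lemma G2 : ∀ (m n : ℕ) (b c : Fin m → ℕ) (x y : Fin m → ℂ),
    ∑ k ∈ Finset.Nat.antidiagonalTuple m n,
        (∏ i, ch (b i) ((k i : ℤ) - c i)) * (∑ i, x i * (k i : ℂ)) * (∑ i, y i * (k i : ℂ))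
      = (∑ i, x i * (c i : ℂ)) * (∑ i, y i * (c i : ℂ)) * ch (∑ i, (b i : ℤ)) ((n : ℤ) - ∑ i, (c i : ℤ))
        + ((∑ i, x i * (c i : ℂ)) * (∑ i, y i * (b i : ℂ)) + (∑ i, y i * (c i : ℂ)) * (∑ i, x i * (b i : ℂ))
            + ∑ i, x i * y i * (b i : ℂ)) * ch ((∑ i, (b i : ℤ)) - 1) ((n : ℤ) - (∑ i, (c i : ℤ)) - 1)
        + ((∑ i, x i * (b i : ℂ)) * (∑ i, y i * (b i : ℂ)) - ∑ i, x i * y i * (b i : ℂ))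
            * ch ((∑ i, (b i : ℤ)) - 2) ((n : ℤ) - (∑ i, (c i : ℤ)) - 2) := by
  intro m
  induction m with
  | zero =>
    intro n b c x y
    cases n with
    | zero => simp
    | succ n => simp
  | succ m ih =>
    intro n b c x y
    rw [sum_AT_succ]
    have inner : ∀ p ∈ Finset.HasAntidiagonal.antidiagonal n,
        (∑ k ∈ Finset.Nat.antidiagonalTuple m p.2,
          (∏ i, ch (b i) ((Fin.cons (α := fun _ => ℕ) p.1 k i : ℤ) - (c i : ℤ)))
            * (∑ i, x i * (Fin.cons (α := fun _ => ℕ) p.1 k i : ℂ))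
            * (∑ i, y i * (Fin.cons (α := fun _ => ℕ) p.1 k i : ℂ)))
        = ch (b 0) ((p.1 : ℤ) - c 0) *
            ((x 0 * (p.1 : ℂ)) * (y 0 * (p.1 : ℂ))
              * ch (∑ i : Fin m, (b i.succ : ℤ)) ((p.2 : ℤ) - ∑ i : Fin m, (c i.succ : ℤ))
            + (x 0 * (p.1 : ℂ)) *
                ((∑ i : Fin m, y i.succ * (c i.succ : ℂ))
                  * ch (∑ i : Fin m, (b i.succ : ℤ)) ((p.2 : ℤ) - ∑ i : Fin m, (c i.succ : ℤ))
                + (∑ i : Fin m, y i.succ * (b i.succ : ℂ))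
                  * ch ((∑ i : Fin m, (b i.succ : ℤ)) - 1) ((p.2 : ℤ) - (∑ i : Fin m, (c i.succ : ℤ)) - 1))
            + (y 0 * (p.1 : ℂ)) *
                ((∑ i : Fin m, x i.succ * (c i.succ : ℂ))
                  * ch (∑ i : Fin m, (b i.succ : ℤ)) ((p.2 : ℤ) - ∑ i : Fin m, (c i.succ : ℤ))
                + (∑ i : Fin m, x i.succ * (b i.succ : ℂ))
                  * ch ((∑ i : Fin m, (b i.succ : ℤ)) - 1) ((p.2 : ℤ) - (∑ i : Fin m, (c i.succ : ℤ)) - 1))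
            + ((∑ i : Fin m, x i.succ * (c i.succ : ℂ)) * (∑ i : Fin m, y i.succ * (c i.succ : ℂ))
                  * ch (∑ i : Fin m, (b i.succ : ℤ)) ((p.2 : ℤ) - ∑ i : Fin m, (c i.succ : ℤ))
                + ((∑ i : Fin m, x i.succ * (c i.succ : ℂ)) * (∑ i : Fin m, y i.succ * (b i.succ : ℂ))
                    + (∑ i : Fin m, y i.succ * (c i.succ : ℂ)) * (∑ i : Fin m, x i.succ * (b i.succ : ℂ))
                    + ∑ i : Fin m, x i.succ * y i.succ * (b i.succ : ℂ))
                  * ch ((∑ i : Fin m, (b i.succ : ℤ)) - 1) ((p.2 : ℤ) - (∑ i : Fin m, (c i.succ : ℤ)) - 1)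
                + ((∑ i : Fin m, x i.succ * (b i.succ : ℂ)) * (∑ i : Fin m, y i.succ * (b i.succ : ℂ))
                    - ∑ i : Fin m, x i.succ * y i.succ * (b i.succ : ℂ))
                  * ch ((∑ i : Fin m, (b i.succ : ℤ)) - 2) ((p.2 : ℤ) - (∑ i : Fin m, (c i.succ : ℤ)) - 2))) := by
      intro p _
      have e1 : ∀ k ∈ Finset.Nat.antidiagonalTuple m p.2,
          (∏ i, ch (b i) ((Fin.cons (α := fun _ => ℕ) p.1 k i : ℤ) - (c i : ℤ)))
            * (∑ i, x i * (Fin.cons (α := fun _ => ℕ) p.1 k i : ℂ))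
            * (∑ i, y i * (Fin.cons (α := fun _ => ℕ) p.1 k i : ℂ))
          = ch (b 0) ((p.1 : ℤ) - c 0) *
              ((x 0 * (p.1 : ℂ)) * (y 0 * (p.1 : ℂ)) * (∏ i : Fin m, ch (b i.succ) ((k i : ℤ) - c i.succ))
              + (x 0 * (p.1 : ℂ)) * ((∏ i : Fin m, ch (b i.succ) ((k i : ℤ) - c i.succ))
                  * (∑ i : Fin m, y i.succ * (k i : ℂ)))
              + (y 0 * (p.1 : ℂ)) * ((∏ i : Fin m, ch (b i.succ) ((k i : ℤ) - c i.succ))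
                  * (∑ i : Fin m, x i.succ * (k i : ℂ)))
              + (∏ i : Fin m, ch (b i.succ) ((k i : ℤ) - c i.succ))
                  * (∑ i : Fin m, x i.succ * (k i : ℂ)) * (∑ i : Fin m, y i.succ * (k i : ℂ))) := by
        intro k _
        rw [Fin.prod_univ_succ, Fin.sum_univ_succ (f := fun i => x i * (Fin.cons (α := fun _ => ℕ) p.1 k i : ℂ)),
          Fin.sum_univ_succ (f := fun i => y i * (Fin.cons (α := fun _ => ℕ) p.1 k i : ℂ))]
        simp only [Fin.cons_zero, Fin.cons_succ]
        ring
      rw [Finset.sum_congr rfl e1, ← Finset.mul_sum]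
      simp only [Finset.sum_add_distrib, ← Finset.mul_sum]
      rw [G0 m p.2 (fun i => b i.succ) (fun i => c i.succ),
        G1 m p.2 (fun i => b i.succ) (fun i => c i.succ) (fun i => y i.succ),
        G1 m p.2 (fun i => b i.succ) (fun i => c i.succ) (fun i => x i.succ),
        ih p.2 (fun i => b i.succ) (fun i => c i.succ) (fun i => x i.succ) (fun i => y i.succ)]
    rw [Finset.sum_congr rfl inner]
    have e2 : ∀ p ∈ Finset.HasAntidiagonal.antidiagonal n,
        (ch (b 0) ((p.1 : ℤ) - c 0) *
            ((x 0 * (p.1 : ℂ)) * (y 0 * (p.1 : ℂ))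
              * ch (∑ i : Fin m, (b i.succ : ℤ)) ((p.2 : ℤ) - ∑ i : Fin m, (c i.succ : ℤ))
            + (x 0 * (p.1 : ℂ)) *
                ((∑ i : Fin m, y i.succ * (c i.succ : ℂ))
                  * ch (∑ i : Fin m, (b i.succ : ℤ)) ((p.2 : ℤ) - ∑ i : Fin m, (c i.succ : ℤ))
                + (∑ i : Fin m, y i.succ * (b i.succ : ℂ))
                  * ch ((∑ i : Fin m, (b i.succ : ℤ)) - 1) ((p.2 : ℤ) - (∑ i : Fin m, (c i.succ : ℤ)) - 1))
            + (y 0 * (p.1 : ℂ)) *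
                ((∑ i : Fin m, x i.succ * (c i.succ : ℂ))
                  * ch (∑ i : Fin m, (b i.succ : ℤ)) ((p.2 : ℤ) - ∑ i : Fin m, (c i.succ : ℤ))
                + (∑ i : Fin m, x i.succ * (b i.succ : ℂ))
                  * ch ((∑ i : Fin m, (b i.succ : ℤ)) - 1) ((p.2 : ℤ) - (∑ i : Fin m, (c i.succ : ℤ)) - 1))
            + ((∑ i : Fin m, x i.succ * (c i.succ : ℂ)) * (∑ i : Fin m, y i.succ * (c i.succ : ℂ))
                  * ch (∑ i : Fin m, (b i.succ : ℤ)) ((p.2 : ℤ) - ∑ i : Fin m, (c i.succ : ℤ))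
                + ((∑ i : Fin m, x i.succ * (c i.succ : ℂ)) * (∑ i : Fin m, y i.succ * (b i.succ : ℂ))
                    + (∑ i : Fin m, y i.succ * (c i.succ : ℂ)) * (∑ i : Fin m, x i.succ * (b i.succ : ℂ))
                    + ∑ i : Fin m, x i.succ * y i.succ * (b i.succ : ℂ))
                  * ch ((∑ i : Fin m, (b i.succ : ℤ)) - 1) ((p.2 : ℤ) - (∑ i : Fin m, (c i.succ : ℤ)) - 1)
                + ((∑ i : Fin m, x i.succ * (b i.succ : ℂ)) * (∑ i : Fin m, y i.succ * (b i.succ : ℂ))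
                    - ∑ i : Fin m, x i.succ * y i.succ * (b i.succ : ℂ))
                  * ch ((∑ i : Fin m, (b i.succ : ℤ)) - 2) ((p.2 : ℤ) - (∑ i : Fin m, (c i.succ : ℤ)) - 2))))
        = ((x 0 * (c 0 : ℂ) + ∑ i : Fin m, x i.succ * (c i.succ : ℂ))
              * (y 0 * (c 0 : ℂ) + ∑ i : Fin m, y i.succ * (c i.succ : ℂ))) *
            (ch (b 0) ((p.1 : ℤ) - c 0)
              * ch (∑ i : Fin m, (b i.succ : ℤ)) ((p.2 : ℤ) - ∑ i : Fin m, (c i.succ : ℤ)))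
          + ((b 0 : ℂ) * (x 0 * y 0 * (2 * (c 0 : ℂ) + 1)
                + x 0 * (∑ i : Fin m, y i.succ * (c i.succ : ℂ)) + y 0 * (∑ i : Fin m, x i.succ * (c i.succ : ℂ)))) *
            (ch ((b 0 : ℤ) - 1) ((p.1 : ℤ) - ((c 0 : ℤ) + 1))
              * ch (∑ i : Fin m, (b i.succ : ℤ)) ((p.2 : ℤ) - ∑ i : Fin m, (c i.succ : ℤ)))
          + (x 0 * y 0 * ((b 0 : ℂ) * ((b 0 : ℂ) - 1))) *
            (ch ((b 0 : ℤ) - 2) ((p.1 : ℤ) - ((c 0 : ℤ) + 2))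
              * ch (∑ i : Fin m, (b i.succ : ℤ)) ((p.2 : ℤ) - ∑ i : Fin m, (c i.succ : ℤ)))
          + (x 0 * (c 0 : ℂ) * (∑ i : Fin m, y i.succ * (b i.succ : ℂ))
              + y 0 * (c 0 : ℂ) * (∑ i : Fin m, x i.succ * (b i.succ : ℂ))
              + ((∑ i : Fin m, x i.succ * (c i.succ : ℂ)) * (∑ i : Fin m, y i.succ * (b i.succ : ℂ))
                  + (∑ i : Fin m, y i.succ * (c i.succ : ℂ)) * (∑ i : Fin m, x i.succ * (b i.succ : ℂ))
                  + ∑ i : Fin m, x i.succ * y i.succ * (b i.succ : ℂ))) *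
            (ch (b 0) ((p.1 : ℤ) - c 0)
              * ch ((∑ i : Fin m, (b i.succ : ℤ)) - 1) ((p.2 : ℤ) - ((∑ i : Fin m, (c i.succ : ℤ)) + 1)))
          + ((b 0 : ℂ) * (x 0 * (∑ i : Fin m, y i.succ * (b i.succ : ℂ))
                + y 0 * (∑ i : Fin m, x i.succ * (b i.succ : ℂ)))) *
            (ch ((b 0 : ℤ) - 1) ((p.1 : ℤ) - ((c 0 : ℤ) + 1))
              * ch ((∑ i : Fin m, (b i.succ : ℤ)) - 1) ((p.2 : ℤ) - ((∑ i : Fin m, (c i.succ : ℤ)) + 1)))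
          + ((∑ i : Fin m, x i.succ * (b i.succ : ℂ)) * (∑ i : Fin m, y i.succ * (b i.succ : ℂ))
              - ∑ i : Fin m, x i.succ * y i.succ * (b i.succ : ℂ)) *
            (ch (b 0) ((p.1 : ℤ) - c 0)
              * ch ((∑ i : Fin m, (b i.succ : ℤ)) - 2) ((p.2 : ℤ) - ((∑ i : Fin m, (c i.succ : ℤ)) + 2))) := by
      intro p _
      have hW1 := mul_ch' (b 0 : ℤ) (c 0 : ℤ) p.1
      have hW2 := mul_ch' ((b 0 : ℤ) - 1) ((c 0 : ℤ) + 1) p.1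
      linear_combination (norm := (push_cast; ring_nf))
        (x 0 * y 0 * ch (∑ i : Fin m, (b i.succ : ℤ)) ((p.2 : ℤ) - ∑ i : Fin m, (c i.succ : ℤ))
            * ((p.1 : ℂ) + (c 0 : ℂ))
          + (x 0 * (∑ i : Fin m, y i.succ * (c i.succ : ℂ)) + y 0 * (∑ i : Fin m, x i.succ * (c i.succ : ℂ)))
            * ch (∑ i : Fin m, (b i.succ : ℤ)) ((p.2 : ℤ) - ∑ i : Fin m, (c i.succ : ℤ))
          + (x 0 * (∑ i : Fin m, y i.succ * (b i.succ : ℂ)) + y 0 * (∑ i : Fin m, x i.succ * (b i.succ : ℂ)))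
            * ch ((∑ i : Fin m, (b i.succ : ℤ)) - 1) ((p.2 : ℤ) - (∑ i : Fin m, (c i.succ : ℤ)) - 1)) * hW1
        + (x 0 * y 0 * ch (∑ i : Fin m, (b i.succ : ℤ)) ((p.2 : ℤ) - ∑ i : Fin m, (c i.succ : ℤ))
            * (b 0 : ℂ)) * hW2
    rw [Finset.sum_congr rfl e2]
    simp only [Finset.sum_add_distrib, ← Finset.mul_sum]
    have H00 := chA'' (b 0) (∑ i : Fin m, b i.succ) 0 0 (c 0) (∑ i : Fin m, (c i.succ : ℤ))
      (by positivity) (by positivity) n 1 (by omega) (by omega)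
      ((b 0 : ℤ) + ∑ i : Fin m, (b i.succ : ℤ)) ((n : ℤ) - ((c 0 : ℤ) + ∑ i : Fin m, (c i.succ : ℤ)))
      (by push_cast; ring) (by push_cast; ring)
    have H10 := chA'' (b 0) (∑ i : Fin m, b i.succ) 1 0 ((c 0 : ℤ) + 1) (∑ i : Fin m, (c i.succ : ℤ))
      (by positivity) (by positivity) n (b 0 : ℂ)
      (fun h => by interval_cases (b 0) <;> simp) (by omega)
      ((b 0 : ℤ) + (∑ i : Fin m, (b i.succ : ℤ)) - 1) ((n : ℤ) - ((c 0 : ℤ) + ∑ i : Fin m, (c i.succ : ℤ)) - 1)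
      (by push_cast; ring) (by push_cast; ring)
    have H20 := chA'' (b 0) (∑ i : Fin m, b i.succ) 2 0 ((c 0 : ℤ) + 2) (∑ i : Fin m, (c i.succ : ℤ))
      (by positivity) (by positivity) n ((b 0 : ℂ) * ((b 0 : ℂ) - 1))
      (fun h => by interval_cases (b 0) <;> norm_num) (by omega)
      ((b 0 : ℤ) + (∑ i : Fin m, (b i.succ : ℤ)) - 2) ((n : ℤ) - ((c 0 : ℤ) + ∑ i : Fin m, (c i.succ : ℤ)) - 2)
      (by push_cast; ring) (by push_cast; ring)
    have hz : ∀ h : (∑ i : Fin m, b i.succ) < 1, ∀ i : Fin m, b i.succ = 0 := by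
      intro h i
      exact Finset.sum_eq_zero_iff.mp (Nat.lt_one_iff.mp h) i (Finset.mem_univ i)
    have H01 := chA'' (b 0) (∑ i : Fin m, b i.succ) 0 1 (c 0) ((∑ i : Fin m, (c i.succ : ℤ)) + 1)
      (by positivity) (by positivity) n
      (x 0 * (c 0 : ℂ) * (∑ i : Fin m, y i.succ * (b i.succ : ℂ))
        + y 0 * (c 0 : ℂ) * (∑ i : Fin m, x i.succ * (b i.succ : ℂ))
        + ((∑ i : Fin m, x i.succ * (c i.succ : ℂ)) * (∑ i : Fin m, y i.succ * (b i.succ : ℂ))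
            + (∑ i : Fin m, y i.succ * (c i.succ : ℂ)) * (∑ i : Fin m, x i.succ * (b i.succ : ℂ))
            + ∑ i : Fin m, x i.succ * y i.succ * (b i.succ : ℂ)))
      (by omega)
      (fun h => by
        have h1 : (∑ i : Fin m, x i.succ * (b i.succ : ℂ)) = 0 :=
          Finset.sum_eq_zero fun i _ => by rw [hz h i]; simp
        have h2 : (∑ i : Fin m, y i.succ * (b i.succ : ℂ)) = 0 :=
          Finset.sum_eq_zero fun i _ => by rw [hz h i]; simp
        have h3 : (∑ i : Fin m, x i.succ * y i.succ * (b i.succ : ℂ)) = 0 :=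
          Finset.sum_eq_zero fun i _ => by rw [hz h i]; simp
        rw [h1, h2, h3]; ring)
      ((b 0 : ℤ) + (∑ i : Fin m, (b i.succ : ℤ)) - 1) ((n : ℤ) - ((c 0 : ℤ) + ∑ i : Fin m, (c i.succ : ℤ)) - 1)
      (by push_cast; ring) (by push_cast; ring)
    have H11 := chA'' (b 0) (∑ i : Fin m, b i.succ) 1 1 ((c 0 : ℤ) + 1) ((∑ i : Fin m, (c i.succ : ℤ)) + 1)
      (by positivity) (by positivity) n
      ((b 0 : ℂ) * (x 0 * (∑ i : Fin m, y i.succ * (b i.succ : ℂ))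
          + y 0 * (∑ i : Fin m, x i.succ * (b i.succ : ℂ))))
      (fun h => by interval_cases (b 0) <;> simp)
      (fun h => by
        have h1 : (∑ i : Fin m, x i.succ * (b i.succ : ℂ)) = 0 :=
          Finset.sum_eq_zero fun i _ => by rw [hz h i]; simp
        have h2 : (∑ i : Fin m, y i.succ * (b i.succ : ℂ)) = 0 :=
          Finset.sum_eq_zero fun i _ => by rw [hz h i]; simp
        rw [h1, h2]; ring)
      ((b 0 : ℤ) + (∑ i : Fin m, (b i.succ : ℤ)) - 2) ((n : ℤ) - ((c 0 : ℤ) + ∑ i : Fin m, (c i.succ : ℤ)) - 2)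
      (by push_cast; ring) (by push_cast; ring)
    have H02 := chA'' (b 0) (∑ i : Fin m, b i.succ) 0 2 (c 0) ((∑ i : Fin m, (c i.succ : ℤ)) + 2)
      (by positivity) (by positivity) n
      ((∑ i : Fin m, x i.succ * (b i.succ : ℂ)) * (∑ i : Fin m, y i.succ * (b i.succ : ℂ))
        - ∑ i : Fin m, x i.succ * y i.succ * (b i.succ : ℂ))
      (by omega)
      (fun h => by
        have := coeff_vanish m (fun i => b i.succ) (fun i => x i.succ) (fun i => y i.succ)
          (by exact Nat.lt_succ_iff.mp h)
        linear_combination this)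
      ((b 0 : ℤ) + (∑ i : Fin m, (b i.succ : ℤ)) - 2) ((n : ℤ) - ((c 0 : ℤ) + ∑ i : Fin m, (c i.succ : ℤ)) - 2)
      (by push_cast; ring) (by push_cast; ring)
    push_cast at H00 H10 H20 H01 H11 H02
    simp only [sub_zero] at H00 H10 H20 H01 H11 H02
    rw [Fin.sum_univ_succ (f := fun i => (b i : ℤ)), Fin.sum_univ_succ (f := fun i => (c i : ℤ)),
      Fin.sum_univ_succ (f := fun i => x i * (c i : ℂ)), Fin.sum_univ_succ (f := fun i => y i * (c i : ℂ)),
      Fin.sum_univ_succ (f := fun i => x i * (b i : ℂ)), Fin.sum_univ_succ (f := fun i => y i * (b i : ℂ)),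
      Fin.sum_univ_succ (f := fun i => x i * y i * (b i : ℂ))]
    linear_combination (norm := (push_cast; ring1))
      ((x 0 * (c 0 : ℂ) + ∑ i : Fin m, x i.succ * (c i.succ : ℂ))
          * (y 0 * (c 0 : ℂ) + ∑ i : Fin m, y i.succ * (c i.succ : ℂ))) * H00
      + (x 0 * y 0 * (2 * (c 0 : ℂ) + 1)
          + x 0 * (∑ i : Fin m, y i.succ * (c i.succ : ℂ))
          + y 0 * (∑ i : Fin m, x i.succ * (c i.succ : ℂ))) * H10
      + (x 0 * y 0) * H20 + H01 + H11 + H02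

lemma ch_gt {a u : ℤ} (h : a < u) : ch a u = 0 := by unfold ch; rw [if_neg (by omega)]

lemma chsplit (a c k : ℕ) (h : c ≤ a) :
    ch (a : ℤ) (k : ℤ) * ch (k : ℤ) (c : ℤ)
      = ch (a : ℤ) (c : ℤ) * ch ((a - c : ℕ) : ℤ) ((k : ℤ) - (c : ℤ)) := by
  rcases lt_or_ge (k : ℤ) (c : ℤ) with hk | hk
  · rw [ch_gt (show (k : ℤ) < (c : ℤ) from hk), ch_neg (show (k : ℤ) - c < 0 by omega)]
    ring
  · rcases lt_or_ge (a : ℤ) (k : ℤ) with ha | ha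
    · rw [ch_gt ha, ch_gt (show ((a - c : ℕ) : ℤ) < (k : ℤ) - c by omega)]
      ring
    · have hkn : k ≤ a := by exact_mod_cast ha
      have hck : c ≤ k := by exact_mod_cast hk
      rw [ch_nat, ch_nat, ch_nat, show (k : ℤ) - c = ((k - c : ℕ) : ℤ) by omega, ch_nat,
        ← Nat.cast_mul, ← Nat.cast_mul, Nat.choose_mul hck]

theorem stmt5 (m n : ℕ) (hm : 1 ≤ m) (a c : Fin m → ℕ) (x : Fin m → ℂ) :
    (∑ k ∈ Finset.Nat.antidiagonalTuple m n, (∏ i, ch (a i) (k i) * ch (k i) (c i)) * (‖∑ i, x i * (k i : ℂ)‖ : ℂ) ^ 2)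
        * (((∑ i, (a i : ℂ)) - (∑ i, (c i : ℂ))) * ((∑ i, (a i : ℂ)) - (∑ i, (c i : ℂ)) - 1))
      = ch ((∑ i, (a i : ℤ)) - ∑ i, (c i : ℤ)) ((n : ℤ) - ∑ i, (c i : ℤ)) * (∏ i, ch (a i) (c i))
        * (((n : ℂ) - (∑ i, (c i : ℂ))) * (((n : ℂ) - (∑ i, (c i : ℂ)) - 1) * (‖∑ i, x i * (a i : ℂ)‖ : ℂ) ^ 2
              + ((∑ i, (a i : ℂ)) - (n : ℂ)) * ((∑ i, (‖x i‖ : ℂ) ^ 2 * (a i : ℂ)) - (∑ i, (‖x i‖ : ℂ) ^ 2 * (c i : ℂ))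
                  + (∑ i, x i * (a i : ℂ)) * (starRingEnd ℂ) (∑ i, x i * (c i : ℂ)) + (starRingEnd ℂ) (∑ i, x i * (a i : ℂ)) * (∑ i, x i * (c i : ℂ))))
           + ((∑ i, (a i : ℂ)) - (n : ℂ)) * ((∑ i, (a i : ℂ)) - (n : ℂ) - 1) * (‖∑ i, x i * (c i : ℂ)‖ : ℂ) ^ 2) := by
  by_cases hac : ∀ i, c i ≤ a i
  · -- main case
    have habs2 : ∀ z : ℂ, ((‖z‖ : ℝ) : ℂ) ^ 2 = z * (starRingEnd ℂ) z := by
      intro z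
      rw [← Complex.ofReal_pow, Complex.sq_norm, ← Complex.mul_conj]
    have hconj : ∀ (w : Fin m → ℕ), (starRingEnd ℂ) (∑ i, x i * (w i : ℂ)) = ∑ i, (starRingEnd ℂ) (x i) * (w i : ℂ) := by
      intro w
      rw [map_sum]
      exact Finset.sum_congr rfl fun i _ => by rw [map_mul, map_natCast]
    have hsum : (∑ k ∈ Finset.Nat.antidiagonalTuple m n,
          (∏ i, ch (a i) (k i) * ch (k i) (c i)) * (‖∑ i, x i * (k i : ℂ)‖ : ℂ) ^ 2)
        = (∏ i, ch (a i) (c i)) * ∑ k ∈ Finset.Nat.antidiagonalTuple m n,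
            (∏ i, ch ((a i - c i : ℕ)) ((k i : ℤ) - c i)) * (∑ i, x i * (k i : ℂ))
              * (∑ i, (starRingEnd ℂ) (x i) * (k i : ℂ)) := by
      rw [Finset.mul_sum]
      refine Finset.sum_congr rfl fun k _ => ?_
      have hp : (∏ i, ch (a i) (k i) * ch (k i) (c i))
          = (∏ i, ch (a i) (c i)) * ∏ i, ch ((a i - c i : ℕ)) ((k i : ℤ) - c i) := by
        rw [← Finset.prod_mul_distrib]
        exact Finset.prod_congr rfl fun i _ => chsplit (a i) (c i) (k i) (hac i)
      rw [hp, habs2, hconj]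
      ring
    rw [hsum, G2 m n (fun i => a i - c i) c x (fun i => (starRingEnd ℂ) (x i))]
    have hZ : (∑ i, (a i : ℤ)) - ∑ i, (c i : ℤ) = ∑ i, ((a i - c i : ℕ) : ℤ) := by
      rw [← Finset.sum_sub_distrib]
      exact Finset.sum_congr rfl fun i _ => by have := hac i; omega
    have hCa : (∑ i, (a i : ℂ)) = (∑ i, ((a i - c i : ℕ) : ℂ)) + ∑ i, (c i : ℂ) := by
      rw [← Finset.sum_add_distrib]
      refine Finset.sum_congr rfl fun i _ => ?_
      have h1 : a i = (a i - c i) + c i := by have := hac i; omega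
      exact_mod_cast congrArg (Nat.cast : ℕ → ℂ) h1
    have hXa : (∑ i, x i * (a i : ℂ)) = (∑ i, x i * ((a i - c i : ℕ) : ℂ)) + ∑ i, x i * (c i : ℂ) := by
      rw [← Finset.sum_add_distrib]
      refine Finset.sum_congr rfl fun i _ => ?_
      have h1 : ((a i : ℂ)) = ((a i - c i : ℕ) : ℂ) + (c i : ℂ) := by
        have : a i = (a i - c i) + c i := by have := hac i; omega
        exact_mod_cast congrArg (Nat.cast : ℕ → ℂ) this
      rw [h1]; ring
    have hconjA : (starRingEnd ℂ) (∑ i, x i * (a i : ℂ))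
        = (∑ i, (starRingEnd ℂ) (x i) * ((a i - c i : ℕ) : ℂ)) + ∑ i, (starRingEnd ℂ) (x i) * (c i : ℂ) := by
      rw [hconj a, ← Finset.sum_add_distrib]
      refine Finset.sum_congr rfl fun i _ => ?_
      have h1 : ((a i : ℂ)) = ((a i - c i : ℕ) : ℂ) + (c i : ℂ) := by
        have : a i = (a i - c i) + c i := by have := hac i; omega
        exact_mod_cast congrArg (Nat.cast : ℕ → ℂ) this
      rw [h1]; ring
    have habsA : ((‖∑ i, x i * (a i : ℂ)‖ : ℝ) : ℂ) ^ 2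
        = ((∑ i, x i * ((a i - c i : ℕ) : ℂ)) + ∑ i, x i * (c i : ℂ))
          * ((∑ i, (starRingEnd ℂ) (x i) * ((a i - c i : ℕ) : ℂ)) + ∑ i, (starRingEnd ℂ) (x i) * (c i : ℂ)) := by
      rw [habs2, hconjA, hXa]
    have habsC : ((‖∑ i, x i * (c i : ℂ)‖ : ℝ) : ℂ) ^ 2
        = (∑ i, x i * (c i : ℂ)) * ∑ i, (starRingEnd ℂ) (x i) * (c i : ℂ) := by
      rw [habs2, hconj c]
    have hAbsX : (∑ i, ((‖x i‖ : ℝ) : ℂ) ^ 2 * (a i : ℂ))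
        = (∑ i, x i * (starRingEnd ℂ) (x i) * ((a i - c i : ℕ) : ℂ)) + ∑ i, x i * (starRingEnd ℂ) (x i) * (c i : ℂ) := by
      rw [← Finset.sum_add_distrib]
      refine Finset.sum_congr rfl fun i _ => ?_
      have h1 : ((a i : ℂ)) = ((a i - c i : ℕ) : ℂ) + (c i : ℂ) := by
        have : a i = (a i - c i) + c i := by have := hac i; omega
        exact_mod_cast congrArg (Nat.cast : ℕ → ℂ) this
      rw [habs2, h1]; ring
    have hAbsXc : (∑ i, ((‖x i‖ : ℝ) : ℂ) ^ 2 * (c i : ℂ))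
        = ∑ i, x i * (starRingEnd ℂ) (x i) * (c i : ℂ) := by
      refine Finset.sum_congr rfl fun i _ => ?_
      rw [habs2]
    have hE2 := chE2 (∑ i, ((a i - c i : ℕ) : ℤ)) ((n : ℤ) - ∑ i, (c i : ℤ))
    have hE3 := chE3 (∑ i, ((a i - c i : ℕ) : ℤ)) ((n : ℤ) - ∑ i, (c i : ℤ))
    push_cast at hE2 hE3
    rw [hZ, habsA, habsC, hAbsX, hAbsXc, hconjA, hconj c, hXa, hCa]
    linear_combination (norm := (push_cast; ring_nf))
      ((∏ i, ch (a i) (c i)) * ((∑ i, x i * ((a i - c i : ℕ) : ℂ)) * (∑ i, (starRingEnd ℂ) (x i) * (c i : ℂ))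
          + (∑ i, (starRingEnd ℂ) (x i) * ((a i - c i : ℕ) : ℂ)) * (∑ i, x i * (c i : ℂ))
          + ∑ i, x i * (starRingEnd ℂ) (x i) * ((a i - c i : ℕ) : ℂ))) * hE2
      + ((∏ i, ch (a i) (c i)) * ((∑ i, x i * ((a i - c i : ℕ) : ℂ)) * (∑ i, (starRingEnd ℂ) (x i) * ((a i - c i : ℕ) : ℂ))
          - ∑ i, x i * (starRingEnd ℂ) (x i) * ((a i - c i : ℕ) : ℂ))) * hE3
  · -- degenerate case
    push_neg at hac
    obtain ⟨j, hj⟩ := hac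
    have hL : (∑ k ∈ Finset.Nat.antidiagonalTuple m n,
        (∏ i, ch (a i) (k i) * ch (k i) (c i)) * (‖∑ i, x i * (k i : ℂ)‖ : ℂ) ^ 2) = 0 := by
      refine Finset.sum_eq_zero fun k _ => ?_
      have hp : (∏ i, ch (a i) (k i) * ch (k i) (c i)) = 0 := by
        apply Finset.prod_eq_zero (Finset.mem_univ j)
        rcases le_or_gt ((k j : ℤ)) ((a j : ℤ)) with h | h
        · have hkc : (k j : ℤ) < (c j : ℤ) := by
            have h2 : (a j : ℤ) < (c j : ℤ) := by exact_mod_cast hj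
            omega
          rw [ch_gt hkc]
          ring
        · rw [ch_gt h]
          ring
      rw [hp, zero_mul]
    have hR : (∏ i, ch (a i) (c i)) = 0 := by
      apply Finset.prod_eq_zero (Finset.mem_univ j)
      exact ch_gt (by exact_mod_cast hj)
    rw [hL, hR]
    ring
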